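/- Let G be a finite simple graph on n vertices. Then there exists a synchronous vectorial correlation r(x,y|v,w) with inputs and outputs V(G) that is a winning strategy for the homomorphism game from G to G, such that the associated map φ_r : M_n(ℂ) → M_n(ℂ) is idempotent (φ_r ∘ φ_r = φ_r) and is minimal in the following sense: whenever p(x,y|v,w) is a synchronous vectorial correlation that is a winning strategy for the homomorphism game from G to G with φ_p idempotent and φ_p ∘ φ_r = φ_r ∘ φ_p = φ_p, then φ_p = φ_r. (Such an r is called a quantum vect-core for G.) -/
import Mathlib


open scoped InnerProductSpace

/-- A realization of a family `p(x,y|v,w)` as a vectorial correlation. -/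
structure VectRealization {I O : Type} [Fintype O] (p : O → O → I → I → ℝ) where
  H : Type
  [nacg : NormedAddCommGroup H]
  [ips : InnerProductSpace ℂ H]
  [cs : CompleteSpace H]
  X : I → O → H
  Y : I → O → H
  orthX : ∀ v : I, ∀ x y : O, x ≠ y → ⟪X v x, X v y⟫_ℂ = 0
  orthY : ∀ w : I, ∀ x y : O, x ≠ y → ⟪Y w x, Y w y⟫_ℂ = 0
  sumEq : ∀ v w : I, ∑ x, X v x = ∑ y, Y w y
  normOne : ∀ v : I, ‖∑ x, X v x‖ = 1
  nonneg : ∀ v w : I, ∀ x y : O, 0 ≤ p x y v w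
  eq : ∀ (x y : O) (v w : I), (p x y v w : ℂ) = ⟪X v x, Y w y⟫_ℂ

/-- `p` is a vectorial correlation if it admits a vectorial realization. -/
def IsVectCorrelation {I O : Type} [Fintype O] (p : O → O → I → I → ℝ) : Prop :=
  Nonempty (VectRealization p)

/-- `p` is synchronous: `p(x,y|v,v) = 0` for all `v` and all `x ≠ y`. -/
def Synchronous {I O : Type} (p : O → O → I → I → ℝ) : Prop :=
  ∀ (v : I) (x y : O), x ≠ y → p x y v v = 0

/-- The winning condition for the graph homomorphism game from `G` to `H`. -/
def WinningFor {VG VH : Type} (G : SimpleGraph VG) (Hg : SimpleGraph VH)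
    (p : VH → VH → VG → VG → ℝ) : Prop :=
  ∀ (v w : VG) (x y : VH), G.Adj v w → ¬ Hg.Adj x y → p x y v w = 0

/-- The map `φ_p(A)_{x,y} = Σ_{v,w} p(x,y|v,w) A_{v,w}`. -/
noncomputable def phiMap {n : ℕ} (p : Fin n → Fin n → Fin n → Fin n → ℝ)
    (A : Matrix (Fin n) (Fin n) ℂ) : Matrix (Fin n) (Fin n) ℂ :=
  Matrix.of fun x y => ∑ v, ∑ w, (p x y v w : ℂ) * A v w

/-- The linear-map version of `phiMap`. -/
noncomputable def phiLin {n : ℕ} (p : Fin n → Fin n → Fin n → Fin n → ℝ) :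
    Matrix (Fin n) (Fin n) ℂ →ₗ[ℂ] Matrix (Fin n) (Fin n) ℂ where
  toFun := phiMap p
  map_add' A B := by
    ext x y
    simp [phiMap, mul_add, Finset.sum_add_distrib]
  map_smul' c A := by
    ext x y
    simp [phiMap, Finset.mul_sum, mul_left_comm]

/-- The classical identity strategy. -/
noncomputable def idStrat (n : ℕ) : Fin n → Fin n → Fin n → Fin n → ℝ :=
  fun x y v w => if x = v ∧ y = w then 1 else 0

lemma phiMap_idStrat {n : ℕ} (A : Matrix (Fin n) (Fin n) ℂ) :
    phiMap (idStrat n) A = A := by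
  ext x y
  simp [phiMap, idStrat, ite_and, apply_ite (Complex.ofReal)]

lemma idStrat_realization (n : ℕ) : IsVectCorrelation (idStrat n) := by
  refine ⟨{
    H := ℂ
    X := fun v x => if x = v then (1 : ℂ) else 0
    Y := fun w y => if y = w then (1 : ℂ) else 0
    orthX := ?_, orthY := ?_, sumEq := ?_, normOne := ?_, nonneg := ?_, eq := ?_ }⟩
  · intro v x y hxy
    rcases eq_or_ne x v with rfl | h
    · simp [if_neg (fun h : y = x => hxy h.symm)]
    · simp [if_neg h]
  · intro w x y hxy
    rcases eq_or_ne x w with rfl | h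
    · simp [if_neg (fun h : y = x => hxy h.symm)]
    · simp [if_neg h]
  · intro v w; simp
  · intro v; simp
  · intro v w x y; unfold idStrat; positivity
  · intro x y v w
    simp only [idStrat, RCLike.inner_apply]
    by_cases hx : x = v <;> by_cases hy : y = w <;> simp [hx, hy]

lemma idem_min_aux {n : ℕ} (f g : Matrix (Fin n) (Fin n) ℂ →ₗ[ℂ] Matrix (Fin n) (Fin n) ℂ)
    (hg : ∀ x, g (g x) = g x)
    (hgf : ∀ x, g (f x) = g x)
    (hfg : ∀ x, f (g x) = g x)
    (hrank : Module.finrank ℂ (LinearMap.range f) ≤ Module.finrank ℂ (LinearMap.range g)) :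
    ∀ x, g x = f x := by
  have hle : LinearMap.range g ≤ LinearMap.range f := by
    rintro _ ⟨x, rfl⟩; exact ⟨g x, hfg x⟩
  have heq : LinearMap.range g = LinearMap.range f :=
    Submodule.eq_of_le_of_finrank_le hle hrank
  intro x
  have hmem : f x ∈ LinearMap.range g := heq ▸ LinearMap.mem_range_self f x
  obtain ⟨y, hy⟩ := hmem
  have h1 : g (f x) = f x := by rw [← hy, hg]
  rw [← h1, hgf]

/-- Every graph `G` admits a quantum vect-core: a winning synchronous vectorial strategy
`r` for the homomorphism game from `G` to `G` such that `φ_r` is idempotent and minimal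
(in the order `ψ ≤ φ ⟺ ψ ∘ φ = φ ∘ ψ = ψ`) among all idempotent maps `φ_p` implemented
by winning synchronous vectorial strategies for the game from `G` to `G`. -/
theorem exists_quantum_vect_core {n : ℕ} (G : SimpleGraph (Fin n)) :
    ∃ r : Fin n → Fin n → Fin n → Fin n → ℝ,
      IsVectCorrelation r ∧ Synchronous r ∧ WinningFor G G r ∧
      phiMap r ∘ phiMap r = phiMap r ∧
      ∀ p : Fin n → Fin n → Fin n → Fin n → ℝ,
        IsVectCorrelation p → Synchronous p → WinningFor G G p →
        phiMap p ∘ phiMap p = phiMap p →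
        phiMap p ∘ phiMap r = phiMap p → phiMap r ∘ phiMap p = phiMap p →
        phiMap p = phiMap r := by
  classical
  set S : Set (Fin n → Fin n → Fin n → Fin n → ℝ) :=
    {p | IsVectCorrelation p ∧ Synchronous p ∧ WinningFor G G p ∧
      phiMap p ∘ phiMap p = phiMap p} with hSdef
  have hidS : idStrat n ∈ S := by
    refine ⟨idStrat_realization n, ?_, ?_, ?_⟩
    · intro v x y hxy
      simp only [idStrat, ite_eq_right_iff, and_imp]
      rintro rfl rfl; exact absurd rfl hxy
    · intro v w x y hvw hxy
      simp only [idStrat, ite_eq_right_iff, and_imp]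
      rintro rfl rfl; exact absurd hvw hxy
    · funext A; simp [Function.comp, phiMap_idStrat]
  set K : Set ℕ := {k | ∃ p ∈ S, Module.finrank ℂ (LinearMap.range (phiLin p)) = k} with hKdef
  have hK : K.Nonempty := ⟨_, idStrat n, hidS, rfl⟩
  obtain ⟨r, hrS, hrank⟩ : sInf K ∈ K := Nat.sInf_mem hK
  refine ⟨r, hrS.1, hrS.2.1, hrS.2.2.1, hrS.2.2.2, ?_⟩
  intro p hp1 hp2 hp3 hp4 hpr hrp
  have hpK : Module.finrank ℂ (LinearMap.range (phiLin p)) ∈ K :=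
    ⟨p, ⟨hp1, hp2, hp3, hp4⟩, rfl⟩
  have hrank_le : Module.finrank ℂ (LinearMap.range (phiLin r)) ≤
      Module.finrank ℂ (LinearMap.range (phiLin p)) := by
    rw [hrank]; exact Nat.sInf_le hpK
  have key := idem_min_aux (phiLin r) (phiLin p)
    (fun A => congrFun hp4 A)
    (fun A => congrFun hpr A)
    (fun A => congrFun hrp A)
    hrank_le
  funext A
  exact key A
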